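/- If z_t = x_m^d, then the number of monomials z_i that are NOT a product z_j z_k with j, k ≥ t equals C(2d-1+m, m), i.e., r*(t) = r̃*(t) = C(2d-1+m, m). -/
import Mathlib


open Finset

/-- total degree of an exponent vector -/
def deg {m : ℕ} (a : Fin m → ℕ) : ℕ := ∑ l, a l

/-- strict graded lexicographic order (x_1 largest, i.e. index 0 most significant) -/
def glexLT {m : ℕ} (a b : Fin m → ℕ) : Prop :=
  deg a < deg b ∨ (deg a = deg b ∧ Pi.Lex (· < ·) (@fun _ => (· < ·)) a b)

def glexLE {m : ℕ} (a b : Fin m → ℕ) : Prop := glexLT a b ∨ a = b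

/-- the finset of exponent vectors with degree at most N -/
def degB (m N : ℕ) : Finset (Fin m → ℕ) :=
  (Fintype.piFinset fun _ => Finset.range (N+1)).filter (fun z => ∑ l, z l ≤ N)

lemma mem_degB {m N : ℕ} {z : Fin m → ℕ} : z ∈ degB m N ↔ ∑ l, z l ≤ N := by
  simp only [degB, Finset.mem_filter, Fintype.mem_piFinset, Finset.mem_range]
  constructor
  · exact fun h => h.2
  · intro h
    refine ⟨fun i => ?_, h⟩
    have : z i ≤ ∑ l, z l := Finset.single_le_sum (fun i _ => Nat.zero_le _) (mem_univ i)
    omega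

lemma tail_sum {m : ℕ} (z : Fin (m+1) → ℕ) : ∑ l, z l = z 0 + ∑ i, Fin.tail z i := by
  rw [Fin.sum_univ_succ]
  rfl

lemma card_degB (m N : ℕ) : (degB m N).card = (N + m).choose m := by
  induction m generalizing N with
  | zero =>
    have : degB 0 N = {(fun i => i.elim0)} := by
      ext z
      simp [mem_degB, Subsingleton.elim z (fun i => i.elim0)]
    simp [this]
  | succ m ih =>
    have hfib : ∀ j ∈ Finset.range (N+1),
        ((degB (m+1) N).filter (fun z => z 0 = j)).card = (degB m (N - j)).card := by
      intro j hj
      simp only [Finset.mem_range] at hj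
      refine Finset.card_bij' (fun z _ => Fin.tail z) (fun g _ => Fin.cons j g) ?hi ?hj ?left ?right
      case hi =>
        intro z hz
        simp only [Finset.mem_filter, mem_degB] at hz
        obtain ⟨hz1, hz2⟩ := hz
        show Fin.tail z ∈ degB m (N - j)
        rw [mem_degB]
        have h := tail_sum z
        omega
      case hj =>
        intro g hg
        rw [mem_degB] at hg
        show Fin.cons j g ∈ (degB (m+1) N).filter (fun z => z 0 = j)
        simp only [Finset.mem_filter, mem_degB]
        have h := tail_sum (Fin.cons j g)
        have h0 : (Fin.cons j g : Fin (m+1) → ℕ) 0 = j := rfl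
        have ht : Fin.tail (Fin.cons j g : Fin (m+1) → ℕ) = g := by
          funext i; simp [Fin.tail]
        rw [h0, ht] at h
        exact ⟨by omega, h0⟩
      case left =>
        intro z hz
        simp only [Finset.mem_filter] at hz
        show Fin.cons j (Fin.tail z) = z
        rw [← hz.2]
        exact Fin.cons_self_tail z
      case right =>
        intro g hg
        funext i; simp [Fin.tail]
    have h0 : ∀ z ∈ degB (m+1) N, z 0 ∈ Finset.range (N+1) := by
      intro z hz
      rw [mem_degB] at hz
      have : z 0 ≤ ∑ l, z l := Finset.single_le_sum (fun i _ => Nat.zero_le _) (mem_univ 0)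
      simp only [Finset.mem_range]; omega
    rw [Finset.card_eq_sum_card_fiberwise h0]
    calc ∑ j ∈ Finset.range (N+1), ((degB (m+1) N).filter (fun z => z 0 = j)).card
        = ∑ j ∈ Finset.range (N+1), (N - j + m).choose m := by
          refine Finset.sum_congr rfl fun j hj => ?_
          rw [hfib j hj, ih (N - j)]
      _ = ∑ j ∈ Finset.range (N+1), (j + m).choose m := by
          rw [← Finset.sum_range_reflect]
          refine Finset.sum_congr rfl fun j hj => ?_
          simp only [Finset.mem_range] at hj
          congr 2
          omega
      _ = ∑ k ∈ Finset.Icc m (N + m), k.choose m := by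
          rw [← Finset.Ico_add_one_right_eq_Icc, Finset.sum_Ico_eq_sum_range,
            show N + m + 1 - m = N + 1 by omega]
          exact Finset.sum_congr rfl fun j _ => by rw [add_comm]
      _ = (N + (m+1)).choose (m+1) := by
          rw [Nat.sum_Icc_choose, show N + m + 1 = N + (m+1) by omega]

lemma deg_mono {m : ℕ} {a b : Fin m → ℕ} (h : glexLE a b) : deg a ≤ deg b := by
  rcases h with (h | h) | rfl
  · exact h.le
  · exact h.1.le
  · exact le_rfl

lemma deg_base {m d : ℕ} (hm : 1 ≤ m) :
    deg (fun l : Fin m => if l = ⟨m - 1, Nat.sub_lt hm Nat.one_pos⟩ then d else 0) = d := by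
  simp [deg]

lemma glexLE_base_iff {m d : ℕ} (hm : 1 ≤ m) (u : Fin m → ℕ) :
    glexLE (fun l : Fin m => if l = ⟨m - 1, Nat.sub_lt hm Nat.one_pos⟩ then d else 0) u ↔
      d ≤ deg u := by
  set M : Fin m := ⟨m - 1, Nat.sub_lt hm Nat.one_pos⟩ with hM
  set e : Fin m → ℕ := fun l => if l = M then d else 0 with he
  have hde : deg e = d := deg_base hm
  constructor
  · intro h
    have := deg_mono h
    omega
  · intro h
    rcases eq_or_lt_of_le h with heq | hlt
    · -- deg u = d
      by_cases hu : e = u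
      · exact Or.inr hu
      · refine Or.inl (Or.inr ⟨by omega, ?_⟩)
        -- find minimal differing index
        have hne : (Finset.univ.filter fun i => e i ≠ u i).Nonempty := by
          by_contra hc
          apply hu
          funext i
          by_contra hi
          exact hc ⟨i, Finset.mem_filter.mpr ⟨mem_univ i, hi⟩⟩
        set i := (Finset.univ.filter fun i => e i ≠ u i).min' hne with hi
        have hmem : e i ≠ u i := (Finset.mem_filter.mp ((Finset.univ.filter
          fun i => e i ≠ u i).min'_mem hne)).2
        have hlow : ∀ j, j < i → e j = u j := by
          intro j hj
          by_contra hc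
          exact absurd (Finset.min'_le _ j (Finset.mem_filter.mpr ⟨mem_univ j, hc⟩))
            (not_le.mpr hj)
        refine ⟨i, hlow, ?_⟩
        by_cases hiM : i = M
        · exfalso
          -- all j ≠ M satisfy j < M hence e j = u j, so u M = d = e M
          have hjM : ∀ j : Fin m, j ≠ M → j < M := by
            intro j hj
            have h1 : (j : ℕ) < m := j.isLt
            have h2 : (j : ℕ) ≠ m - 1 := fun hc => hj (Fin.ext hc)
            exact Fin.lt_def.mpr (by simp only [hM]; omega)
          have hall : ∀ j : Fin m, j ≠ M → u j = 0 := by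
            intro j hj
            have := hlow j (hiM ▸ hjM j hj)
            simp only [he, if_neg hj] at this
            omega
          have : deg u = u M := by
            rw [deg, Finset.sum_eq_single M (fun j _ hj => hall j hj) (by simp)]
          apply hmem
          rw [hiM]
          simp only [he, if_pos rfl]
          omega
        · have : e i = 0 := by simp [he, hiM]
          rw [this]
          omega
    · exact Or.inl (Or.inl (by omega))

lemma exists_part {m : ℕ} (f : Fin m → ℕ) (k : ℕ) (hk : k ≤ ∑ l, f l) :
    ∃ g : Fin m → ℕ, (∀ i, g i ≤ f i) ∧ ∑ l, g l = k := by
  induction k with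
  | zero => exact ⟨0, fun i => Nat.zero_le _, by simp⟩
  | succ k ih =>
    obtain ⟨g, hg1, hg2⟩ := ih (by omega)
    have : ∃ i, g i < f i := by
      by_contra hc
      push_neg at hc
      have : ∑ l, f l ≤ ∑ l, g l := Finset.sum_le_sum fun i _ => hc i
      omega
    obtain ⟨i, hi⟩ := this
    refine ⟨Function.update g i (g i + 1), fun j => ?_, ?_⟩
    · rcases eq_or_ne j i with rfl | hj
      · rw [Function.update_self]; omega
      · rw [Function.update_of_ne hj]; exact hg1 j
    · rw [Finset.sum_update_of_mem (mem_univ i), Finset.sdiff_singleton_eq_erase]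
      have := Finset.add_sum_erase Finset.univ g (mem_univ i)
      omega

lemma prod_iff {m d : ℕ} (hm : 1 ≤ m) (z : Fin m → ℕ) :
    (∃ u v : Fin m → ℕ,
        glexLE (fun l : Fin m => if l = ⟨m - 1, Nat.sub_lt hm Nat.one_pos⟩ then d else 0) u ∧
        glexLE (fun l : Fin m => if l = ⟨m - 1, Nat.sub_lt hm Nat.one_pos⟩ then d else 0) v ∧
        z = u + v) ↔ 2 * d ≤ deg z := by
  constructor
  · rintro ⟨u, v, hu, hv, rfl⟩
    rw [glexLE_base_iff hm] at hu hv
    have : deg (u + v) = deg u + deg v := by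
      simp [deg, Finset.sum_add_distrib]
    omega
  · intro h
    obtain ⟨u, hu1, hu2⟩ := exists_part z d (by unfold deg at h; omega)
    refine ⟨u, fun l => z l - u l, ?_, ?_, ?_⟩
    · rw [glexLE_base_iff hm]; exact le_of_eq hu2.symm
    · rw [glexLE_base_iff hm]
      have : ∑ l, u l + ∑ l, (z l - u l) = ∑ l, z l := by
        rw [← Finset.sum_add_distrib]
        exact Finset.sum_congr rfl fun l _ => by have := hu1 l; omega
      unfold deg at h ⊢
      show d ≤ ∑ l, (z l - u l)
      omega
    · funext l
      have := hu1 l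
      simp only [Pi.add_apply]
      omega

theorem stmt7 (m d : ℕ) (hm : 1 ≤ m) (hd : 1 ≤ d) :
    Set.ncard {z : Fin m → ℕ |
        ¬ ∃ u v : Fin m → ℕ,
          glexLE (fun l : Fin m => if l = ⟨m - 1, Nat.sub_lt hm Nat.one_pos⟩ then d else 0) u ∧
          glexLE (fun l : Fin m => if l = ⟨m - 1, Nat.sub_lt hm Nat.one_pos⟩ then d else 0) v ∧
          z = u + v} = Nat.choose (2 * d - 1 + m) m ∧
    -- the set of non-products is downward closed, hence r*(t) = r̃*(t)
    (∀ z w : Fin m → ℕ, glexLE z w →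
      (¬ ∃ u v : Fin m → ℕ,
          glexLE (fun l : Fin m => if l = ⟨m - 1, Nat.sub_lt hm Nat.one_pos⟩ then d else 0) u ∧
          glexLE (fun l : Fin m => if l = ⟨m - 1, Nat.sub_lt hm Nat.one_pos⟩ then d else 0) v ∧
          w = u + v) →
      ¬ ∃ u v : Fin m → ℕ,
          glexLE (fun l : Fin m => if l = ⟨m - 1, Nat.sub_lt hm Nat.one_pos⟩ then d else 0) u ∧
          glexLE (fun l : Fin m => if l = ⟨m - 1, Nat.sub_lt hm Nat.one_pos⟩ then d else 0) v ∧
          z = u + v) := by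
  constructor
  · have hset : {z : Fin m → ℕ |
        ¬ ∃ u v : Fin m → ℕ,
          glexLE (fun l : Fin m => if l = ⟨m - 1, Nat.sub_lt hm Nat.one_pos⟩ then d else 0) u ∧
          glexLE (fun l : Fin m => if l = ⟨m - 1, Nat.sub_lt hm Nat.one_pos⟩ then d else 0) v ∧
          z = u + v} = ↑(degB m (2 * d - 1)) := by
      ext z
      simp only [Set.mem_setOf_eq, Finset.coe_filter, Finset.mem_coe, mem_degB]
      rw [prod_iff hm]
      have : deg z = ∑ l, z l := rfl
      omega
    rw [hset, Set.ncard_coe_finset, card_degB]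
  · intro z w hzw hw hz
    apply hw
    rw [prod_iff hm] at hz ⊢
    exact le_trans hz (deg_mono hzw)
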